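/- Existence for two simultaneous impacts: given a momentum p₀ and two unit contact normals u ≠ ±v with angle parameter γ = arcsin(‖u+v‖/2) > 0, there exists a minimal sequence (w_1,…,w_n) with each w_i ∈ {u,v} and n ≤ ⌈π/γ⌉ such that p_f = p₀ Γ(w_1)⋯Γ(w_n) is feasible, i.e. ⟨p_f,u⟩ ≥ 0 and ⟨p_f,v⟩ ≥ 0. -/

import Mathlib

/-!
Write `c = ⟨u,v⟩ = -cos 2γ` and put the momentum in polar form
`(⟨p,u⟩, ⟨p,v⟩) = r (sin (2γ - ψ), sin ψ)`; it is feasible as soon as `ψ ∈ [0, 2γ]` modulo `2π`.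
Reflecting in `v` produces the same form with `u` and `v` exchanged and `ψ` replaced by `ψ + 2γ`,
so along the alternating sequence `v, u, v, …` the angle advances by `2γ` per impact and enters
the feasible arc after at most `⌈π/γ⌉` impacts. A shortest feasible sublist of that sequence is
minimal.
-/

open Matrix

noncomputable def kin {n : ℕ} (M : Matrix (Fin n) (Fin n) ℝ)
    (x y : Matrix (Fin 1) (Fin n) ℝ) : ℝ :=
  (x * M⁻¹ * yᵀ) 0 0

noncomputable def Gam {n : ℕ} (M : Matrix (Fin n) (Fin n) ℝ)
    (u : Matrix (Fin 1) (Fin n) ℝ) : Matrix (Fin n) (Fin n) ℝ :=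
  1 - (2 / kin M u u) • (M⁻¹ * uᵀ * u)

theorem List.exists_sublist_minimal {α : Type*} (P : List α → Prop) {l₀ : List α} (h : P l₀) :
    ∃ l, l.Sublist l₀ ∧ P l ∧ ∀ l', l'.Sublist l → l' ≠ l → ¬ P l' := by
  obtain ⟨l, ⟨hl₀, hl⟩, hmin⟩ :=
    (measure List.length).wf.has_min {l | l.Sublist l₀ ∧ P l} ⟨l₀, List.Sublist.refl _, h⟩
  refine ⟨l, hl₀, hl, fun l' hl' hne hP => hmin l' ⟨hl'.trans hl₀, hP⟩ ?_⟩
  exact lt_of_le_of_ne hl'.length_le fun hlen => hne (hl'.eq_of_length hlen)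

theorem exists_polar_sin (a b α : ℝ) (hα : Real.sin α ≠ 0) :
    ∃ r ψ : ℝ, 0 ≤ r ∧ a = r * Real.sin (α - ψ) ∧ b = r * Real.sin ψ := by
  set z : ℂ := ⟨(a + Real.cos α * b) / Real.sin α, b⟩
  refine ⟨‖z‖, z.arg, norm_nonneg z, ?_, (Complex.norm_mul_sin_arg z).symm⟩
  rw [Real.sin_sub, mul_sub, mul_left_comm, mul_left_comm _ (Real.cos α),
    Complex.norm_mul_cos_arg, Complex.norm_mul_sin_arg]
  change a = Real.sin α * ((a + Real.cos α * b) / Real.sin α) - Real.cos α * b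
  field_simp
  ring

theorem exists_sin_nonneg_add_nat_mul {γ : ℝ} (hγ : 0 < γ) (hγπ : 2 * γ ≤ Real.pi) (ψ : ℝ) :
    ∃ k ≤ ⌈Real.pi / γ⌉₊, 0 ≤ Real.sin (ψ + 2 * k * γ) ∧
      0 ≤ Real.sin (2 * γ - (ψ + 2 * k * γ)) := by
  have hp := Real.two_pi_pos
  obtain ⟨y, j, ⟨hy₀, hy₁⟩, rfl⟩ : ∃ y, ∃ j : ℤ,
      y ∈ Set.Ioc (2 * γ - 2 * Real.pi) (2 * γ) ∧ ψ = y + j * (2 * Real.pi) := by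
    refine ⟨toIocMod hp (2 * γ - 2 * Real.pi) ψ, toIocDiv hp (2 * γ - 2 * Real.pi) ψ, ?_, ?_⟩
    · simpa using toIocMod_mem_Ioc hp (2 * γ - 2 * Real.pi) ψ
    · rw [← zsmul_eq_mul, toIocMod_add_toIocDiv_zsmul]
  set k := ⌈-y / (2 * γ)⌉₊
  have hk₀ : 0 ≤ y + 2 * k * γ := by
    have := (div_le_iff₀ (by positivity)).1 (Nat.le_ceil (-y / (2 * γ)))
    linarith
  have hk₁ : y + 2 * k * γ ≤ 2 * γ := by
    rcases le_or_gt 0 y with hy | hy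
    · have : k = 0 :=
        Nat.ceil_eq_zero.2 (div_nonpos_of_nonpos_of_nonneg (by linarith) (by positivity))
      simpa [this] using hy₁
    · have := mul_lt_mul_of_pos_right
        (Nat.ceil_lt_add_one (div_nonneg (neg_nonneg.2 hy.le) (by positivity : (0:ℝ) ≤ 2 * γ)))
        (by positivity : (0:ℝ) < 2 * γ)
      rw [add_mul, div_mul_cancel₀ _ (by positivity)] at this
      linarith
  refine ⟨k, Nat.ceil_mono ?_, ?_, ?_⟩
  · rw [div_le_div_iff₀ (by positivity) hγ]
    nlinarith
  · rw [add_right_comm, Real.sin_add_int_mul_two_pi]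
    exact Real.sin_nonneg_of_nonneg_of_le_pi hk₀ (by linarith)
  · rw [show 2 * γ - (y + j * (2 * Real.pi) + 2 * k * γ)
        = 2 * γ - (y + 2 * k * γ) + ↑(-j) * (2 * Real.pi) by push_cast; ring,
      Real.sin_add_int_mul_two_pi]
    exact Real.sin_nonneg_of_nonneg_of_le_pi (by linarith) (by linarith)

theorem Real.cos_two_mul_arcsin_sqrt_div_two {x : ℝ} (h₀ : 0 ≤ x) (h₄ : x ≤ 4) :
    Real.cos (2 * Real.arcsin (Real.sqrt x / 2)) = 1 - x / 2 := by
  have hs : Real.sqrt x ≤ 2 := Real.sqrt_le_iff.2 ⟨zero_le_two, by linarith⟩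
  rw [Real.cos_two_mul, Real.cos_sq', Real.sin_arcsin (by linarith [Real.sqrt_nonneg x])
    (by linarith), div_pow, Real.sq_sqrt h₀]
  ring

section kin

variable {n : ℕ} {M : Matrix (Fin n) (Fin n) ℝ}

theorem kin_eq_dotProduct (x y : Matrix (Fin 1) (Fin n) ℝ) :
    kin M x y = star (x 0) ⬝ᵥ M⁻¹ *ᵥ y 0 := by
  simp only [kin, mul_apply, transpose_apply, dotProduct, mulVec, star_trivial, Finset.sum_mul,
    Finset.mul_sum, mul_assoc]
  exact Finset.sum_comm

theorem kin_comm (hM : M.IsSymm) (x y : Matrix (Fin 1) (Fin n) ℝ) : kin M x y = kin M y x := by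
  rw [kin_eq_dotProduct, kin_eq_dotProduct, star_trivial, star_trivial, dotProduct_mulVec,
    ← mulVec_transpose, hM.inv.eq, dotProduct_comm]

theorem kin_add_self (hM : M.IsSymm) (x y : Matrix (Fin 1) (Fin n) ℝ) :
    kin M (x + y) (x + y) = kin M x x + 2 * kin M x y + kin M y y := by
  have h : kin M (x + y) (x + y) = kin M x x + kin M x y + kin M y x + kin M y y := by
    simp only [kin, Matrix.add_mul, transpose_add, Matrix.mul_add, Matrix.add_apply]
    ring
  rw [h, kin_comm hM y x]
  ring

theorem kin_sub_self (hM : M.IsSymm) (x y : Matrix (Fin 1) (Fin n) ℝ) :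
    kin M (x - y) (x - y) = kin M x x - 2 * kin M x y + kin M y y := by
  have h : kin M (x - y) (x - y) = kin M x x - kin M x y - kin M y x + kin M y y := by
    simp only [kin, Matrix.sub_mul, transpose_sub, Matrix.mul_sub, Matrix.sub_apply]
    ring
  rw [h, kin_comm hM y x]
  ring

theorem kin_self_nonneg (hM : M.PosDef) (w : Matrix (Fin 1) (Fin n) ℝ) : 0 ≤ kin M w w := by
  rw [kin_eq_dotProduct]
  exact hM.inv.posSemidef.dotProduct_mulVec_nonneg _

theorem kin_self_pos (hM : M.PosDef) {w : Matrix (Fin 1) (Fin n) ℝ} (hw : w ≠ 0) :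
    0 < kin M w w := by
  rw [kin_eq_dotProduct]
  refine hM.inv.dotProduct_mulVec_pos fun h => hw ?_
  ext i j
  rw [Subsingleton.elim i 0, h]
  rfl

theorem kin_mul_Gam {w : Matrix (Fin 1) (Fin n) ℝ} (hw : kin M w w = 1)
    (p q : Matrix (Fin 1) (Fin n) ℝ) :
    kin M (p * Gam M w) q = kin M p q - 2 * kin M p w * kin M w q := by
  have hpw : p * (M⁻¹ * wᵀ * w) * M⁻¹ * qᵀ = (p * M⁻¹ * wᵀ) * (w * M⁻¹ * qᵀ) := by
    simp only [Matrix.mul_assoc]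
  rw [Gam, hw, div_one, Matrix.mul_sub, Matrix.mul_one, Matrix.mul_smul]
  simp only [kin, Matrix.sub_mul, Matrix.smul_mul, hpw, Matrix.sub_apply, Matrix.smul_apply,
    smul_eq_mul]
  rw [mul_apply (M := p * M⁻¹ * wᵀ), Fin.sum_univ_one, mul_assoc]

end kin

section unitCovectors

variable {n : ℕ} {M : Matrix (Fin n) (Fin n) ℝ} {u v : Matrix (Fin 1) (Fin n) ℝ} {γ : ℝ}

theorem kin_eq_neg_cos_two_mul (hM : M.PosDef) (huu : kin M u u = 1) (hvv : kin M v v = 1)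
    (hγ : γ = Real.arcsin (Real.sqrt (kin M (u + v) (u + v)) / 2)) :
    kin M u v = -Real.cos (2 * γ) := by
  have hsym : M.IsSymm := isHermitian_iff_isSymm.1 hM.isHermitian
  have hsum : kin M (u + v) (u + v) = 2 + 2 * kin M u v := by
    rw [kin_add_self hsym, huu, hvv]; ring
  have hsub : kin M (u - v) (u - v) = 2 - 2 * kin M u v := by
    rw [kin_sub_self hsym, huu, hvv]; ring
  have hle : kin M u v ≤ 1 := by linarith [kin_self_nonneg hM (u - v)]
  rw [hγ, Real.cos_two_mul_arcsin_sqrt_div_two (kin_self_nonneg hM _) (by linarith), hsum]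
  ring

theorem two_mul_lt_pi (hM : M.PosDef) (huu : kin M u u = 1) (hvv : kin M v v = 1)
    (huv : u ≠ v) (hγ : γ = Real.arcsin (Real.sqrt (kin M (u + v) (u + v)) / 2)) :
    2 * γ < Real.pi := by
  have hsym : M.IsSymm := isHermitian_iff_isSymm.1 hM.isHermitian
  have hsum : kin M (u + v) (u + v) = 2 + 2 * kin M u v := by
    rw [kin_add_self hsym, huu, hvv]; ring
  have hsub : kin M (u - v) (u - v) = 2 - 2 * kin M u v := by
    rw [kin_sub_self hsym, huu, hvv]; ring
  have hlt : kin M u v < 1 := by linarith [kin_self_pos hM (sub_ne_zero.2 huv)]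
  have hsq : Real.sqrt (kin M (u + v) (u + v)) < 2 := by
    rw [Real.sqrt_lt' two_pos]
    linarith
  have := Real.arcsin_lt_pi_div_two.2 (show Real.sqrt (kin M (u + v) (u + v)) / 2 < 1 by linarith)
  linarith

end unitCovectors

def List.alternating {α : Type*} (u v : α) : ℕ → List α
  | 0 => []
  | k + 1 => v :: List.alternating v u k

@[simp]
theorem List.length_alternating {α : Type*} (u v : α) (k : ℕ) :
    (List.alternating u v k).length = k := by
  induction k generalizing u v with
  | zero => rfl
  | succ k ih => simp [List.alternating, ih]

theorem List.mem_alternating {α : Type*} {u v w : α} {k : ℕ} (hw : w ∈ List.alternating u v k) :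
    w ∈ ({u, v} : Set α) := by
  induction k generalizing u v with
  | zero => simp [List.alternating] at hw
  | succ k ih =>
    rcases List.mem_cons.1 hw with rfl | hw
    · exact Or.inr rfl
    · exact Set.pair_comm v u ▸ ih hw

section reflections

variable {n : ℕ} {M : Matrix (Fin n) (Fin n) ℝ} {u v : Matrix (Fin 1) (Fin n) ℝ} {γ r : ℝ}

theorem kin_mul_Gam_polar (hvv : kin M v v = 1) (hvu : kin M v u = -Real.cos (2 * γ))
    {p : Matrix (Fin 1) (Fin n) ℝ} {ψ : ℝ}
    (hpu : kin M p u = r * Real.sin (2 * γ - ψ)) (hpv : kin M p v = r * Real.sin ψ) :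
    kin M (p * Gam M v) v = r * Real.sin (2 * γ - (ψ + 2 * γ)) ∧
      kin M (p * Gam M v) u = r * Real.sin (ψ + 2 * γ) := by
  rw [kin_mul_Gam hvv, kin_mul_Gam hvv, hpu, hpv, hvv, hvu]
  constructor
  · rw [show 2 * γ - (ψ + 2 * γ) = -ψ by ring, Real.sin_neg]
    ring
  · rw [Real.sin_add, Real.sin_sub]
    ring

theorem feasible_mul_prod_alternating (hM : M.IsSymm) (huu : kin M u u = 1)
    (hvv : kin M v v = 1) (huv : kin M u v = -Real.cos (2 * γ)) (hr : 0 ≤ r) (k : ℕ)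
    {p : Matrix (Fin 1) (Fin n) ℝ} {ψ : ℝ}
    (hpu : kin M p u = r * Real.sin (2 * γ - ψ)) (hpv : kin M p v = r * Real.sin ψ)
    (hθ : 0 ≤ Real.sin (ψ + 2 * k * γ)) (hθ' : 0 ≤ Real.sin (2 * γ - (ψ + 2 * k * γ))) :
    0 ≤ kin M (p * ((List.alternating u v k).map (Gam M)).prod) u ∧
      0 ≤ kin M (p * ((List.alternating u v k).map (Gam M)).prod) v := by
  induction k generalizing u v p ψ with
  | zero =>
    simp only [List.alternating, List.map_nil, List.prod_nil, Matrix.mul_one, hpu, hpv]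
    simp only [CharP.cast_eq_zero, mul_zero, zero_mul, add_zero] at hθ hθ'
    exact ⟨mul_nonneg hr hθ', mul_nonneg hr hθ⟩
  | succ k ih =>
    have hvu : kin M v u = -Real.cos (2 * γ) := kin_comm hM v u ▸ huv
    obtain ⟨hpv', hpu'⟩ := kin_mul_Gam_polar hvv hvu hpu hpv
    have hψ : ψ + 2 * γ + 2 * k * γ = ψ + 2 * ↑(k + 1) * γ := by push_cast; ring
    rw [List.alternating, List.map_cons, List.prod_cons, ← Matrix.mul_assoc]
    exact (ih hvv huu hvu hpv' hpu' (hψ ▸ hθ) (hψ ▸ hθ')).symm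

end reflections

theorem existence_two_impacts_general {n : ℕ}
    (M : Matrix (Fin n) (Fin n) ℝ) (hM : M.PosDef)
    (u v : Matrix (Fin 1) (Fin n) ℝ)
    (huu : kin M u u = 1) (hvv : kin M v v = 1)
    (huv : u ≠ v)
    (γ : ℝ) (hγ : γ = Real.arcsin (Real.sqrt (kin M (u + v) (u + v)) / 2))
    (hγpos : 0 < γ)
    (p0 : Matrix (Fin 1) (Fin n) ℝ) :
    ∃ L : List (Matrix (Fin 1) (Fin n) ℝ),
      (∀ w ∈ L, w ∈ ({u, v} : Set (Matrix (Fin 1) (Fin n) ℝ))) ∧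
      L.length ≤ ⌈Real.pi / γ⌉₊ ∧
      (0 ≤ kin M (p0 * (L.map (Gam M)).prod) u ∧
        0 ≤ kin M (p0 * (L.map (Gam M)).prod) v) ∧
      (∀ L' : List (Matrix (Fin 1) (Fin n) ℝ), L'.Sublist L → L' ≠ L →
        ¬ (0 ≤ kin M (p0 * (L'.map (Gam M)).prod) u ∧
            0 ≤ kin M (p0 * (L'.map (Gam M)).prod) v)) := by
  have hsym : M.IsSymm := isHermitian_iff_isSymm.1 hM.isHermitian
  have hπ := two_mul_lt_pi hM huu hvv huv hγ
  have hsin : Real.sin (2 * γ) ≠ 0 := (Real.sin_pos_of_pos_of_lt_pi (by linarith) hπ).ne'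
  obtain ⟨r, ψ, hr, hpu, hpv⟩ := exists_polar_sin (kin M p0 u) (kin M p0 v) (2 * γ) hsin
  obtain ⟨k, hkN, hθ, hθ'⟩ := exists_sin_nonneg_add_nat_mul hγpos hπ.le ψ
  have hfeas := feasible_mul_prod_alternating hsym huu hvv
    (kin_eq_neg_cos_two_mul hM huu hvv hγ) hr k hpu hpv hθ hθ'
  obtain ⟨L, hL, hLfeas, hLmin⟩ := List.exists_sublist_minimal
    (fun L => 0 ≤ kin M (p0 * (L.map (Gam M)).prod) u ∧ 0 ≤ kin M (p0 * (L.map (Gam M)).prod) v)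
    hfeas
  refine ⟨L, fun w hw => List.mem_alternating (hL.subset hw), ?_, hLfeas, hLmin⟩
  exact hL.length_le.trans ((List.length_alternating u v k).trans_le hkN)

theorem existence_two_impacts {n : ℕ}
    (M : Matrix (Fin n) (Fin n) ℝ) (hM : M.PosDef)
    (u v : Matrix (Fin 1) (Fin n) ℝ)
    (huu : kin M u u = 1) (hvv : kin M v v = 1)
    (huv : u ≠ v) (huv' : u ≠ -v)
    (γ : ℝ) (hγ : γ = Real.arcsin (Real.sqrt (kin M (u + v) (u + v)) / 2))
    (hγpos : 0 < γ)
    (p0 : Matrix (Fin 1) (Fin n) ℝ) :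
    ∃ L : List (Matrix (Fin 1) (Fin n) ℝ),
      (∀ w ∈ L, w ∈ ({u, v} : Set (Matrix (Fin 1) (Fin n) ℝ))) ∧
      L.length ≤ ⌈Real.pi / γ⌉₊ ∧
      (0 ≤ kin M (p0 * (L.map (Gam M)).prod) u ∧
        0 ≤ kin M (p0 * (L.map (Gam M)).prod) v) ∧
      (∀ L' : List (Matrix (Fin 1) (Fin n) ℝ), L'.Sublist L → L' ≠ L →
        ¬ (0 ≤ kin M (p0 * (L'.map (Gam M)).prod) u ∧
            0 ≤ kin M (p0 * (L'.map (Gam M)).prod) v)) :=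
  existence_two_impacts_general M hM u v huu hvv huv γ hγ hγpos p0
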